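/- Let G be a connected graph on n vertices with adjacency eigenvalues λ₁ ≥ ⋯ ≥ λₙ, λ = max{|λ₂|,|λₙ|}, and normalized Perron eigenvector ν. For a natural number k, write x^{(k)} = x + x² + ⋯ + x^k, and for S, T ⊆ V let W_k(S,T) be the number of walks of length at most k with one endpoint in S and one in T. Then |W_k(S,T) − λ₁^{(k)}⟨χ_S,ν⟩⟨χ_T,ν⟩| ≤ λ^{(k)}·sqrt((|S| − ⟨χ_S,ν⟩²)(|T| − ⟨χ_T,ν⟩²)). -/

import Mathlib

open Matrix Finset

/-! Write `χ_S = s + ⟨χ_S, ν⟩ ν` and `χ_T = t + ⟨χ_T, ν⟩ ν` with `s, t ⊥ ν`. The matrix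
`B = A + ⋯ + A^k` is symmetric with `B ν = λ₁^{(k)} ν`, so the cross terms vanish and the
discrepancy is exactly `sᵀ B t = ∑ⱼ μⱼ^{(k)} ⟨s, vⱼ⟩ ⟨t, vⱼ⟩` in an orthonormal eigenbasis `vⱼ`
of `A`. Every eigenvalue satisfies `|μⱼ| ≤ λ`, except possibly a simple top eigenvalue
`λ₁ > λ₂`; its eigenvector is then parallel to `ν`, hence orthogonal to `s`. Each term is thus
at most `λ^{(k)} |⟨s, vⱼ⟩| |⟨t, vⱼ⟩|`, and Cauchy–Schwarz together with Parseval,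
`‖s‖² = |S| - ⟨χ_S, ν⟩²`, gives the bound. -/

def powerSum {R : Type*} [Semiring R] (k : ℕ) (x : R) : R := ∑ i ∈ Icc 1 k, x ^ i

lemma abs_powerSum_le {R : Type*} [Ring R] [LinearOrder R] [IsStrictOrderedRing R] {x y : R}
    (k : ℕ) (h : |x| ≤ y) : |powerSum k x| ≤ powerSum k y :=
  (abs_sum_le_sum_abs _ _).trans <| sum_le_sum fun i _ => by
    rw [abs_pow]; exact pow_le_pow_left₀ (abs_nonneg x) h i

lemma abs_le_max_or_forall_ne_of_antitone {α : Type*} [AddCommGroup α] [LinearOrder α]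
    [IsOrderedAddMonoid α] {n : ℕ} (hn : 1 < n) {f : Fin n → α} (hf : Antitone f) (p : Fin n) :
    |f p| ≤ max |f ⟨1, hn⟩| |f ⟨n - 1, Nat.sub_one_lt_of_lt hn⟩| ∨
      ∀ q ≠ p, f q ≠ f ⟨0, Nat.zero_lt_of_lt hn⟩ := by
  have hle_one : ∀ q : Fin n, q ≠ ⟨0, Nat.zero_lt_of_lt hn⟩ → f q ≤ f ⟨1, hn⟩ := fun q hq =>
    hf (Fin.le_def.mpr (Nat.one_le_iff_ne_zero.mpr fun h => hq (Fin.ext h)))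
  by_cases hp : p = ⟨0, Nat.zero_lt_of_lt hn⟩
  · subst hp
    rcases (hf (Fin.le_def.mpr zero_le_one) : f ⟨1, hn⟩ ≤ f ⟨0, _⟩).eq_or_lt with h | h
    · exact Or.inl (h ▸ le_max_left _ _)
    · exact Or.inr fun q hq => ((hle_one q hq).trans_lt h).ne
  · have hp_le : f ⟨n - 1, Nat.sub_one_lt_of_lt hn⟩ ≤ f p :=
      hf (Fin.le_def.mpr (Nat.le_sub_one_of_lt p.isLt))
    exact Or.inl ((abs_le_max_abs_abs hp_le (hle_one p hp)).trans_eq (max_comm _ _))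

lemma ite_mem_dotProduct {ι R : Type*} [Fintype ι] [DecidableEq ι] [NonAssocSemiring R]
    (S : Finset ι) (y : ι → R) :
    (fun u => if u ∈ S then (1 : R) else 0) ⬝ᵥ y = ∑ u ∈ S, y u := by
  simp [dotProduct]

lemma ite_mem_dotProduct_self {ι R : Type*} [Fintype ι] [DecidableEq ι] [NonAssocSemiring R]
    (S : Finset ι) :
    (fun u => if u ∈ S then (1 : R) else 0) ⬝ᵥ (fun u => if u ∈ S then (1 : R) else 0) =
      S.card := by
  rw [ite_mem_dotProduct, sum_congr rfl fun u hu => if_pos hu, sum_const, nsmul_one]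

namespace Matrix

variable {ι R : Type*} [Fintype ι]

lemma IsSymm.dotProduct_mulVec_comm [CommSemiring R] {B : Matrix ι ι R} (hB : B.IsSymm)
    (x y : ι → R) : x ⬝ᵥ (B *ᵥ y) = (B *ᵥ x) ⬝ᵥ y := by
  rw [dotProduct_mulVec, ← mulVec_transpose, hB.eq]

lemma dotProduct_eq_zero_of_eigenvalue_ne [CommRing R] [NoZeroDivisors R] {A : Matrix ι ι R}
    (hA : A.IsSymm) {u w : ι → R} {a c : R} (hu : A *ᵥ u = a • u) (hw : A *ᵥ w = c • w)
    (hac : a ≠ c) :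
    u ⬝ᵥ w = 0 := by
  have h := hA.dotProduct_mulVec_comm u w
  rw [hu, hw, dotProduct_smul, smul_dotProduct, smul_eq_mul, smul_eq_mul] at h
  exact (mul_eq_zero.mp (by linear_combination -h : (a - c) * (u ⬝ᵥ w) = 0)).resolve_left
    (sub_ne_zero.mpr hac)

lemma sub_smul_dotProduct_self [CommRing R] {ν : ι → R} (hν : ν ⬝ᵥ ν = 1) (x : ι → R) :
    (x - (x ⬝ᵥ ν) • ν) ⬝ᵥ (x - (x ⬝ᵥ ν) • ν) = x ⬝ᵥ x - (x ⬝ᵥ ν) ^ 2 := by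
  simp only [sub_dotProduct, dotProduct_sub, smul_dotProduct, dotProduct_smul, hν,
    dotProduct_comm ν x, smul_eq_mul]
  ring

lemma sub_smul_dotProduct [CommRing R] {ν : ι → R} (hν : ν ⬝ᵥ ν = 1) (x : ι → R) :
    (x - (x ⬝ᵥ ν) • ν) ⬝ᵥ ν = 0 := by
  rw [sub_dotProduct, smul_dotProduct, hν, smul_eq_mul, mul_one, sub_self]

lemma IsSymm.dotProduct_mulVec_eq_add_of_mulVec_eq_smul [CommRing R] {B : Matrix ι ι R}
    (hB : B.IsSymm) {ν : ι → R} {c : R} (hBν : B *ᵥ ν = c • ν) (hν : ν ⬝ᵥ ν = 1)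
    (x y : ι → R) :
    x ⬝ᵥ (B *ᵥ y) = c * (x ⬝ᵥ ν) * (y ⬝ᵥ ν) +
      (x - (x ⬝ᵥ ν) • ν) ⬝ᵥ (B *ᵥ (y - (y ⬝ᵥ ν) • ν)) := by
  have hνB : ν ⬝ᵥ (B *ᵥ y) = c * (y ⬝ᵥ ν) := by
    rw [hB.dotProduct_mulVec_comm, hBν, smul_dotProduct, smul_eq_mul, dotProduct_comm]
  simp only [mulVec_sub, mulVec_smul, hBν, dotProduct_sub, sub_dotProduct, dotProduct_smul,
    smul_dotProduct, hνB, hν, smul_eq_mul]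
  ring

variable [DecidableEq ι]

lemma IsSymm.powerSum [CommSemiring R] {A : Matrix ι ι R} (hA : A.IsSymm) (k : ℕ) :
    (powerSum k A).IsSymm := by
  simp only [IsSymm, _root_.powerSum, transpose_sum, transpose_pow, hA.eq]

lemma powerSum_mulVec_of_mulVec_eq_smul [CommSemiring R] {A : Matrix ι ι R} {x : ι → R} {r : R}
    (k : ℕ) (h : A *ᵥ x = r • x) : powerSum k A *ᵥ x = powerSum k r • x := by
  have hpow : ∀ i : ℕ, (A ^ i) *ᵥ x = r ^ i • x := by
    intro i
    induction i with
    | zero => simp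
    | succ i ih => rw [pow_succ', ← mulVec_mulVec, ih, mulVec_smul, h, smul_smul, pow_succ]
  simp only [_root_.powerSum, sum_mulVec, sum_smul, hpow]

end Matrix

lemma abs_sum_mul_mul_le {ι : Type*} (s : Finset ι) {d a b : ι → ℝ} {C : ℝ} (hC : 0 ≤ C)
    (h : ∀ j ∈ s, a j = 0 ∨ |d j| ≤ C) :
    |∑ j ∈ s, d j * a j * b j| ≤ C * √((∑ j ∈ s, a j ^ 2) * ∑ j ∈ s, b j ^ 2) := by
  have hterm : ∀ j ∈ s, |d j * a j * b j| ≤ C * (|a j| * |b j|) := fun j hj => by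
    rcases h j hj with ha | hd
    · simp [ha]
    · rw [abs_mul, abs_mul, mul_assoc]
      exact mul_le_mul_of_nonneg_right hd (by positivity)
  calc |∑ j ∈ s, d j * a j * b j|
      ≤ ∑ j ∈ s, C * (|a j| * |b j|) := (abs_sum_le_sum_abs _ _).trans (sum_le_sum hterm)
    _ = C * ∑ j ∈ s, |a j| * |b j| := (mul_sum _ _ _).symm
    _ ≤ C * (√(∑ j ∈ s, |a j| ^ 2) * √(∑ j ∈ s, |b j| ^ 2)) :=
        mul_le_mul_of_nonneg_left (Real.sum_mul_le_sqrt_mul_sqrt _ _ _) hC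
    _ = C * √((∑ j ∈ s, a j ^ 2) * ∑ j ∈ s, b j ^ 2) := by
        simp only [sq_abs, ← Real.sqrt_mul (sum_nonneg fun j _ => sq_nonneg (a j))]

namespace OrthonormalBasis

variable {ι : Type*} [Fintype ι] (b : OrthonormalBasis ι ℝ (EuclideanSpace ℝ ι))

lemma dotProduct_eq_sum (x y : ι → ℝ) : x ⬝ᵥ y = ∑ j, (x ⬝ᵥ b j) * (y ⬝ᵥ b j) := by
  have h := b.sum_inner_mul_inner (WithLp.toLp 2 x) (WithLp.toLp 2 y)
  simp only [EuclideanSpace.inner_eq_star_dotProduct, star_trivial] at h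
  rw [dotProduct_comm x y, ← h]
  exact sum_congr rfl fun j _ => by rw [dotProduct_comm x, mul_comm]

lemma dotProduct_mulVec_eq_sum {B : Matrix ι ι ℝ} (hB : B.IsSymm) {d : ι → ℝ}
    (hBb : ∀ j, B *ᵥ b j = d j • b j) (x y : ι → ℝ) :
    x ⬝ᵥ (B *ᵥ y) = ∑ j, d j * (x ⬝ᵥ b j) * (y ⬝ᵥ b j) := by
  rw [b.dotProduct_eq_sum]
  refine sum_congr rfl fun j _ => ?_
  rw [dotProduct_comm (B *ᵥ y), hB.dotProduct_mulVec_comm, hBb, smul_dotProduct, smul_eq_mul,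
    dotProduct_comm (b j) y]
  ring

lemma dotProduct_eq_zero_of_simple_eigenvalue {A : Matrix ι ι ℝ} (hA : A.IsSymm) {μ : ι → ℝ}
    (hAb : ∀ j, A *ᵥ b j = μ j • b j) {ν : ι → ℝ} {r : ℝ} (hν : A *ᵥ ν = r • ν) (hν0 : ν ≠ 0)
    {j : ι} (hj : ∀ m ≠ j, μ m ≠ r) {x : ι → ℝ} (hx : x ⬝ᵥ ν = 0) : x ⬝ᵥ b j = 0 := by
  have hsingle : ∀ y : ι → ℝ, y ⬝ᵥ ν = (y ⬝ᵥ b j) * (ν ⬝ᵥ b j) := fun y => by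
    rw [b.dotProduct_eq_sum]
    refine sum_eq_single j (fun m _ hm => ?_) (by simp)
    rw [dotProduct_comm ν, dotProduct_eq_zero_of_eigenvalue_ne hA (hAb m) hν (hj m hm), mul_zero]
  have hνb : ν ⬝ᵥ b j ≠ 0 := fun h =>
    hν0 (dotProduct_self_eq_zero.mp (by rw [hsingle, h, mul_zero]))
  exact (mul_eq_zero.mp (hx ▸ (hsingle x).symm)).resolve_right hνb

lemma abs_dotProduct_mulVec_le {B : Matrix ι ι ℝ} (hB : B.IsSymm) {d : ι → ℝ}
    (hBb : ∀ j, B *ᵥ b j = d j • b j) {C : ℝ} (hC : 0 ≤ C) {x : ι → ℝ}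
    (hx : ∀ j, x ⬝ᵥ b j = 0 ∨ |d j| ≤ C) (y : ι → ℝ) :
    |x ⬝ᵥ (B *ᵥ y)| ≤ C * √((x ⬝ᵥ x) * (y ⬝ᵥ y)) := by
  rw [b.dotProduct_mulVec_eq_sum hB hBb, b.dotProduct_eq_sum x x, b.dotProduct_eq_sum y y]
  simpa only [← sq] using abs_sum_mul_mul_le univ hC fun j _ => hx j

end OrthonormalBasis

/-- **Walk Expander Mixing Lemma for irregular graphs** (Corollary 22 of the paper):
`W_k(S,T) = χ_Sᵀ(A + A² + ⋯ + A^k)χ_T` satisfies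
`|W_k(S,T) − λ₁^{(k)}⟨χ_S,ν⟩⟨χ_T,ν⟩| ≤ λ^{(k)} √((|S| − ⟨χ_S,ν⟩²)(|T| − ⟨χ_T,ν⟩²))`. -/
theorem walk_expander_mixing {n : ℕ} (hn : 2 ≤ n) (k : ℕ)
    (A : Matrix (Fin n) (Fin n) ℝ)
    (hAH : A.IsHermitian)
    (lam : Fin n → ℝ) (hmono : Antitone lam)
    (heig : ∃ e : Fin n ≃ Fin n, ∀ i, lam i = hAH.eigenvalues (e i))
    (ν : Fin n → ℝ) (hνnorm : ∑ i, ν i ^ 2 = 1)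
    (hνeig : A *ᵥ ν = lam ⟨0, by omega⟩ • ν)
    (lamAbs : ℝ)
    (hlamAbs : lamAbs = max |lam ⟨1, by omega⟩| |lam ⟨n - 1, by omega⟩|)
    (S T : Finset (Fin n)) :
    |(fun u => if u ∈ S then (1 : ℝ) else 0) ⬝ᵥ
        ((∑ i ∈ Finset.Icc 1 k, A ^ i) *ᵥ fun u => if u ∈ T then (1 : ℝ) else 0)
      - (∑ i ∈ Finset.Icc 1 k, lam ⟨0, by omega⟩ ^ i) *
          (∑ u ∈ S, ν u) * (∑ u ∈ T, ν u)|
      ≤ (∑ i ∈ Finset.Icc 1 k, lamAbs ^ i) *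
        Real.sqrt (((S.card : ℝ) - (∑ u ∈ S, ν u) ^ 2) *
          ((T.card : ℝ) - (∑ u ∈ T, ν u) ^ 2)) := by
  obtain ⟨e, he⟩ := heig
  have hA : A.IsSymm := (conjTranspose_eq_transpose_of_trivial A).symm.trans hAH
  have hνν : ν ⬝ᵥ ν = 1 := by simpa only [dotProduct, sq] using hνnorm
  have hν0 : ν ≠ 0 := fun h => by simp [h] at hνν
  have hsmall_or_simple : ∀ j, |hAH.eigenvalues j| ≤ lamAbs ∨
      ∀ m ≠ j, hAH.eigenvalues m ≠ lam ⟨0, by omega⟩ := by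
    have hμ : ∀ m, hAH.eigenvalues m = lam (e.symm m) := fun m => by rw [he, e.apply_symm_apply]
    intro j
    simp only [hμ]
    rcases abs_le_max_or_forall_ne_of_antitone hn hmono (e.symm j) with h | h
    · exact Or.inl (hlamAbs ▸ h)
    · exact Or.inr fun m hm => h _ (e.symm.injective.ne hm)
  have hlamAbs0 : 0 ≤ lamAbs := hlamAbs ▸ (abs_nonneg _).trans (le_max_left _ _)
  have hB : (powerSum k A).IsSymm := hA.powerSum k
  change |_ ⬝ᵥ (powerSum k A *ᵥ _) - powerSum k (lam ⟨0, by omega⟩) * _ * _|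
    ≤ powerSum k lamAbs * _
  rw [← ite_mem_dotProduct S ν, ← ite_mem_dotProduct T ν,
    hB.dotProduct_mulVec_eq_add_of_mulVec_eq_smul (powerSum_mulVec_of_mulVec_eq_smul k hνeig)
    hνν, add_sub_cancel_left]
  refine (hAH.eigenvectorBasis.abs_dotProduct_mulVec_le hB
    (fun j => powerSum_mulVec_of_mulVec_eq_smul k (hAH.mulVec_eigenvectorBasis j))
    ((abs_nonneg _).trans (abs_powerSum_le k (abs_of_nonneg hlamAbs0).le)) (fun j => ?_)
    _).trans_eq ?_
  · rcases hsmall_or_simple j with h | h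
    · exact Or.inr (abs_powerSum_le k h)
    · exact Or.inl (hAH.eigenvectorBasis.dotProduct_eq_zero_of_simple_eigenvalue hA
        hAH.mulVec_eigenvectorBasis hνeig hν0 h (sub_smul_dotProduct hνν _))
  · rw [sub_smul_dotProduct_self hνν, sub_smul_dotProduct_self hνν, ite_mem_dotProduct_self,
      ite_mem_dotProduct_self]
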